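/- Fix an odd prime p and sets X, Y. Let g : L(X) → L(Y) be a surjective group homomorphism such that for every v ∈ X, the subgroup of L(Y)/Z(L(Y)) generated by the images of g(a_v) and g(b_v) is not cyclic. Then for every v ∈ X there is a unique y ∈ Y such that the subgroup of L(Y)/Z(L(Y)) generated by the images of g(a_v) and g(b_v) equals the subgroup generated by the images of a_y and b_y. -/

import Mathlib

open scoped commutatorElement

/-- The relators defining `L(X)`: `p`-th powers, triple commutators (making the
group nilpotent of class ≤ 2), and the commutators `[a_v, b_v]`. -/
def LRelators (p : ℕ) (X : Type*) : Set (FreeGroup (X ⊕ X)) :=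
  {w | ∃ u : FreeGroup (X ⊕ X), w = u ^ p} ∪
    {w | ∃ u v t : FreeGroup (X ⊕ X), w = ⁅⁅u, v⁆, t⁆} ∪
    {w | ∃ v : X, w = ⁅FreeGroup.of (Sum.inl v : X ⊕ X), FreeGroup.of (Sum.inr v : X ⊕ X)⁆}

/-- Mekler's group `L(X)`: the free 2-nilpotent group of exponent `p` on
generators `a_v, b_v` (`v ∈ X`), modulo the relations `[a_v, b_v] = 1`. -/
def LGroup (p : ℕ) (X : Type*) : Type _ :=
  FreeGroup (X ⊕ X) ⧸ Subgroup.normalClosure (LRelators p X)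

instance (p : ℕ) (X : Type*) : Group (LGroup p X) :=
  inferInstanceAs (Group (FreeGroup (X ⊕ X) ⧸ Subgroup.normalClosure (LRelators p X)))

/-- The generator `a_v` of `L(X)`. -/
def aGen (p : ℕ) {X : Type*} (v : X) : LGroup p X :=
  QuotientGroup.mk (FreeGroup.of (Sum.inl v))

/-- The generator `b_v` of `L(X)`. -/
def bGen (p : ℕ) {X : Type*} (v : X) : LGroup p X :=
  QuotientGroup.mk (FreeGroup.of (Sum.inr v))

/-- The epimorphism `q̂ : L(X) → L(Y)` induced by a map `q : X → Y`, sending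
`a_v ↦ a_{q v}` and `b_v ↦ b_{q v}`. -/
def inducedHom (p : ℕ) {X Y : Type*} (q : X → Y) : LGroup p X →* LGroup p Y :=
  QuotientGroup.lift _
    ((QuotientGroup.mk' _).comp (FreeGroup.map (Sum.map q q)))
    (by
      have hnorm : ((Subgroup.normalClosure (LRelators p Y)).comap
          (FreeGroup.map (Sum.map q q))).Normal :=
        Subgroup.Normal.comap Subgroup.normalClosure_normal _
      have hle : Subgroup.normalClosure (LRelators p X) ≤
          (Subgroup.normalClosure (LRelators p Y)).comap
            (FreeGroup.map (Sum.map q q)) := by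
        apply Subgroup.normalClosure_le_normal
        intro w hw
        simp only [LRelators, Set.mem_union, Set.mem_setOf_eq] at hw
        rcases hw with ((⟨u, rfl⟩ | ⟨u, v, t, rfl⟩) | ⟨v, rfl⟩)
        · refine Subgroup.mem_comap.mpr (Subgroup.subset_normalClosure ?_)
          exact Or.inl (Or.inl ⟨FreeGroup.map (Sum.map q q) u, by rw [map_pow]⟩)
        · refine Subgroup.mem_comap.mpr (Subgroup.subset_normalClosure ?_)
          exact Or.inl (Or.inr ⟨_, _, _, by
            rw [map_commutatorElement, map_commutatorElement]⟩)
        · refine Subgroup.mem_comap.mpr (Subgroup.subset_normalClosure ?_)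
          refine Or.inr ⟨q v, ?_⟩
          rw [map_commutatorElement, FreeGroup.map.of, FreeGroup.map.of]
          rfl
      intro w hw
      have hmem : FreeGroup.map (Sum.map q q) w ∈
          Subgroup.normalClosure (LRelators p Y) :=
        Subgroup.mem_comap.mp (hle hw)
      show QuotientGroup.mk' _ (FreeGroup.map (Sum.map q q) w) = 1
      exact (QuotientGroup.eq_one_iff (N := Subgroup.normalClosure (LRelators p Y)) _).mpr hmem)


/-- The central quotient `L(X)/Z(L(X))`. -/
def CentralQuot (p : ℕ) (X : Type*) : Type _ :=
  LGroup p X ⧸ Subgroup.center (LGroup p X)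

instance (p : ℕ) (X : Type*) : Group (CentralQuot p X) :=
  inferInstanceAs (Group (LGroup p X ⧸ Subgroup.center (LGroup p X)))

/-- The image of `g ∈ L(X)` in the central quotient `L(X)/Z(L(X))`. -/
def cbar {p : ℕ} {X : Type*} (g : LGroup p X) : CentralQuot p X :=
  QuotientGroup.mk g


open scoped Classical

namespace Mek

variable (p : ℕ) (Y : Type*)

abbrev V := (Y ⊕ Y) → ZMod p
abbrev W := ((Y ⊕ Y) × (Y ⊕ Y)) → ZMod p

def bad (e f : Y ⊕ Y) : Prop :=
  (∃ y, e = Sum.inl y ∧ f = Sum.inr y) ∨ (∃ y, e = Sum.inr y ∧ f = Sum.inl y)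

variable {p Y}

noncomputable def cmap (v w : V p Y) : W p Y :=
  fun ef => if bad Y ef.1 ef.2 then 0 else v ef.1 * w ef.2

lemma cmap_apply (v w : V p Y) (ef : (Y ⊕ Y) × (Y ⊕ Y)) :
    cmap v w ef = if bad Y ef.1 ef.2 then 0 else v ef.1 * w ef.2 := rfl

@[ext] structure M (p : ℕ) (Y : Type*) where
  a : V p Y
  b : W p Y

noncomputable instance : Mul (M p Y) := ⟨fun x y => ⟨x.a + y.a, x.b + y.b + cmap x.a y.a⟩⟩
instance : One (M p Y) := ⟨⟨0, 0⟩⟩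
noncomputable instance : Inv (M p Y) := ⟨fun x => ⟨-x.a, -x.b + cmap x.a x.a⟩⟩

lemma mul_a (x y : M p Y) : (x * y).a = x.a + y.a := rfl
lemma mul_b (x y : M p Y) : (x * y).b = x.b + y.b + cmap x.a y.a := rfl
lemma one_a : (1 : M p Y).a = 0 := rfl
lemma one_b : (1 : M p Y).b = 0 := rfl
lemma inv_a (x : M p Y) : (x⁻¹).a = -x.a := rfl
lemma inv_b (x : M p Y) : (x⁻¹).b = -x.b + cmap x.a x.a := rfl

noncomputable instance : Group (M p Y) := by
  refine Group.ofLeftAxioms (fun x y z => ?_) (fun x => ?_) (fun x => ?_) <;>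
    ext ef <;>
    simp only [mul_a, mul_b, one_a, one_b, inv_a, inv_b, cmap_apply, Pi.add_apply,
      Pi.neg_apply, Pi.zero_apply] <;>
    (first
      | (split_ifs <;> ring)
      | ring)

end Mek
namespace Mek
variable {p : ℕ} {Y : Type*}

lemma pow_a (x : M p Y) (n : ℕ) : (x ^ n).a = (n : ZMod p) • x.a := by
  induction n with
  | zero => simp [one_a]
  | succ n ih =>
      rw [pow_succ, mul_a, ih]
      push_cast
      ext e; simp only [Pi.add_apply, Pi.smul_apply, smul_eq_mul]; ring

lemma pow_b (x : M p Y) (n : ℕ) :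
    (x ^ n).b = (n : ZMod p) • x.b + ((n.choose 2 : ℕ) : ZMod p) • cmap x.a x.a := by
  induction n with
  | zero => simp [one_b]
  | succ n ih =>
      rw [pow_succ, mul_b, ih, pow_a, Nat.choose_succ_succ, Nat.choose_one_right]
      have : cmap ((n : ZMod p) • x.a) x.a = (n : ZMod p) • cmap x.a x.a := by
        ext ef
        simp only [cmap_apply, Pi.smul_apply, smul_eq_mul]
        split_ifs <;> ring
      rw [this]
      push_cast
      ext ef; simp only [Pi.add_apply, Pi.smul_apply, smul_eq_mul]; ring

lemma exp_p (hp : p.Prime) (hodd : Odd p) (x : M p Y) : x ^ p = 1 := by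
  have h2 : 2 < p := hp.two_le.lt_of_ne (by rintro rfl; rw [Nat.odd_iff] at hodd; norm_num at hodd)
  have hd : ((p.choose 2 : ℕ) : ZMod p) = 0 := by
    rw [ZMod.natCast_eq_zero_iff]
    exact hp.dvd_choose_self (by norm_num) h2
  ext ef
  · rw [pow_a]; simp [ZMod.natCast_self, one_a]
  · rw [pow_b]; simp [ZMod.natCast_self, hd, one_b]

lemma central_of_a_eq_zero (x : M p Y) (h : x.a = 0) (y : M p Y) : Commute y x := by
  unfold Commute SemiconjBy
  ext ef <;>
    simp only [mul_a, mul_b, h, cmap_apply, Pi.add_apply, Pi.zero_apply, zero_mul,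
      mul_zero, ite_self, add_zero] <;>
    ring

lemma commutator_a (x y : M p Y) : (⁅x, y⁆).a = 0 := by
  show (x * y * x⁻¹ * y⁻¹).a = 0
  simp only [mul_a, inv_a]; abel

lemma commutator_b (x y : M p Y) : (⁅x, y⁆).b = cmap x.a y.a - cmap y.a x.a := by
  show (x * y * x⁻¹ * y⁻¹).b = _
  ext ef
  simp only [mul_b, mul_a, inv_b, inv_a, cmap_apply, Pi.add_apply, Pi.neg_apply,
    Pi.sub_apply]
  split_ifs <;> ring

lemma triple_commutator (x y z : M p Y) : ⁅⁅x, y⁆, z⁆ = 1 :=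
  commutatorElement_eq_one_iff_commute.mpr
    (central_of_a_eq_zero ⁅x,y⁆ (commutator_a x y) z).symm

variable (p)
noncomputable def delta (e : Y ⊕ Y) : V p Y := fun f => if e = f then 1 else 0

noncomputable def mgen (e : Y ⊕ Y) : M p Y := ⟨delta p e, 0⟩

@[simp] lemma mgen_a (e : Y ⊕ Y) : (mgen p e).a = delta p e := rfl
@[simp] lemma mgen_b (e : Y ⊕ Y) : (mgen p e).b = 0 := rfl

lemma cmap_delta_ab (y : Y) :
    cmap (delta p (Sum.inl y : Y ⊕ Y)) (delta p (Sum.inr y)) = 0 := by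
  ext ⟨e, f⟩
  simp only [cmap_apply, delta, Pi.zero_apply]
  split_ifs with h h1 h2 <;> try ring
  exact absurd (Or.inl ⟨y, h1.symm, h2.symm⟩) h

lemma cmap_delta_ba (y : Y) :
    cmap (delta p (Sum.inr y : Y ⊕ Y)) (delta p (Sum.inl y)) = 0 := by
  ext ⟨e, f⟩
  simp only [cmap_apply, delta, Pi.zero_apply]
  split_ifs with h h1 h2 <;> try ring
  exact absurd (Or.inr ⟨y, h1.symm, h2.symm⟩) h

lemma mgen_comm_same (y : Y) :
    ⁅mgen p (Sum.inl y : Y ⊕ Y), mgen p (Sum.inr y : Y ⊕ Y)⁆ = 1 := by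
  ext ef
  · rw [commutator_a]; simp [one_a]
  · rw [commutator_b, mgen_a, mgen_a, cmap_delta_ab, cmap_delta_ba]
    simp [one_b]

end Mek

namespace Mek

variable {p : ℕ} {Y : Type*}

/-- The generator of `L(Y)` indexed by `e : Y ⊕ Y`. -/
def genL (p : ℕ) {Y : Type*} (e : Y ⊕ Y) : LGroup p Y :=
  QuotientGroup.mk (FreeGroup.of e)

lemma aGen_eq (y : Y) : aGen p y = genL p (Sum.inl y) := rfl
lemma bGen_eq (y : Y) : bGen p y = genL p (Sum.inr y) := rfl

/-- The quotient map as a monoid hom. -/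
def mkL (p : ℕ) {Y : Type*} : FreeGroup (Y ⊕ Y) →* LGroup p Y :=
  QuotientGroup.mk' (Subgroup.normalClosure (LRelators p Y))

lemma mk_eq_mkL (w : FreeGroup (Y ⊕ Y)) : (QuotientGroup.mk w : LGroup p Y) = mkL p w := rfl

lemma mk_mul (u v : FreeGroup (Y ⊕ Y)) :
    (QuotientGroup.mk (u * v) : LGroup p Y) = QuotientGroup.mk u * QuotientGroup.mk v := rfl

lemma mk_inv (u : FreeGroup (Y ⊕ Y)) :
    (QuotientGroup.mk u⁻¹ : LGroup p Y) = (QuotientGroup.mk u)⁻¹ := rfl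

lemma mk_rel {w : FreeGroup (Y ⊕ Y)} (h : w ∈ LRelators p Y) :
    (QuotientGroup.mk w : LGroup p Y) = 1 := by
  rw [QuotientGroup.eq_one_iff]
  exact Subgroup.subset_normalClosure h

lemma Lexp (x : LGroup p Y) : x ^ p = 1 := by
  refine QuotientGroup.induction_on x fun w => ?_
  have : (QuotientGroup.mk w : LGroup p Y) ^ p = QuotientGroup.mk (w ^ p) := rfl
  refine this.trans ?_
  exact mk_rel (Or.inl (Or.inl ⟨w, rfl⟩))

lemma Ltriple (x y z : LGroup p Y) : ⁅⁅x, y⁆, z⁆ = 1 := by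
  refine QuotientGroup.induction_on x fun u => ?_
  refine QuotientGroup.induction_on y fun v => ?_
  refine QuotientGroup.induction_on z fun t => ?_
  rw [mk_eq_mkL, mk_eq_mkL, mk_eq_mkL, ← map_commutatorElement, ← map_commutatorElement,
    ← mk_eq_mkL]
  exact mk_rel (Or.inl (Or.inr ⟨u, v, t, rfl⟩))

lemma Lcomm_central (x y : LGroup p Y) : ⁅x, y⁆ ∈ Subgroup.center (LGroup p Y) := by
  rw [Subgroup.mem_center_iff]
  intro g
  exact (commutatorElement_eq_one_iff_commute.mp (Ltriple x y g)).symm.eq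

lemma Lcommutator_le_center : commutator (LGroup p Y) ≤ Subgroup.center (LGroup p Y) :=
  Subgroup.commutator_le.mpr fun g1 _ g2 _ => Lcomm_central g1 g2

variable (hp : p.Prime) (hodd : Odd p)

/-- The homomorphism from `L(Y)` to the model group `M`. -/
noncomputable def phi (hp : p.Prime) (hodd : Odd p) : LGroup p Y →* M p Y :=
  QuotientGroup.lift _ (FreeGroup.lift (mgen p))
    (by
      have hle : Subgroup.normalClosure (LRelators p Y) ≤ (FreeGroup.lift (mgen p)).ker := by
        apply Subgroup.normalClosure_le_normal
        intro w hw
        rcases hw with ((⟨u, rfl⟩ | ⟨u, v, t, rfl⟩) | ⟨y, rfl⟩) <;>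
          rw [SetLike.mem_coe, MonoidHom.mem_ker]
        · rw [map_pow]; exact exp_p hp hodd _
        · rw [map_commutatorElement, map_commutatorElement]; exact triple_commutator _ _ _
        · rw [map_commutatorElement, FreeGroup.lift_apply_of, FreeGroup.lift_apply_of]
          exact mgen_comm_same p y
      intro w hw
      exact hle hw)

lemma phi_mk (w : FreeGroup (Y ⊕ Y)) :
    phi hp hodd (QuotientGroup.mk w : LGroup p Y) = FreeGroup.lift (mgen p) w := rfl

lemma phi_gen (e : Y ⊕ Y) : phi hp hodd (genL p e) = mgen p e := by
  rw [genL, phi_mk, FreeGroup.lift_apply_of]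

/-- Projection of the model group onto its first (abelian) component. -/
def vhom : M p Y →* Multiplicative (V p Y) where
  toFun x := Multiplicative.ofAdd x.a
  map_one' := rfl
  map_mul' _ _ := rfl

/-- The "abelianization coordinates" homomorphism. -/
noncomputable def psi (hp : p.Prime) (hodd : Odd p) : LGroup p Y →* Multiplicative (V p Y) :=
  (vhom).comp (phi hp hodd)

lemma psi_apply (x : LGroup p Y) :
    psi hp hodd x = Multiplicative.ofAdd (phi hp hodd x).a := rfl

lemma psi_gen (e : Y ⊕ Y) :
    psi hp hodd (genL p e) = Multiplicative.ofAdd (delta p e) := by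
  rw [psi_apply, phi_gen, mgen_a]

end Mek

namespace Mek

variable {p : ℕ} {Y : Type*}

lemma abel_of_surjective :
    Function.Surjective (Abelianization.of : LGroup p Y →* Abelianization (LGroup p Y)) :=
  fun x => QuotientGroup.induction_on x fun z => ⟨z, rfl⟩

lemma abel_exp (x : Abelianization (LGroup p Y)) : x ^ p = 1 := by
  obtain ⟨z, rfl⟩ := abel_of_surjective x
  rw [← map_pow, Lexp, map_one]

/-- `σ : (Y ⊕ Y) →₀ ℤ  →+  Additive (Abelianization L(Y))`. -/
noncomputable def sigma (p : ℕ) (Y : Type*) :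
    ((Y ⊕ Y) →₀ ℤ) →+ Additive (Abelianization (LGroup p Y)) :=
  Finsupp.liftAddHom fun e =>
    (zmultiplesHom _) (Additive.ofMul (Abelianization.of (genL p e)))

/-- `ι : (Y ⊕ Y) →₀ ℤ  →+  V`. -/
noncomputable def iota (p : ℕ) (Y : Type*) : ((Y ⊕ Y) →₀ ℤ) →+ V p Y :=
  Finsupp.liftAddHom fun e => (zmultiplesHom _) (delta p e)

lemma iota_apply (u : (Y ⊕ Y) →₀ ℤ) (f : Y ⊕ Y) :
    iota p Y u f = ((u f : ℤ) : ZMod p) := by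
  induction u using Finsupp.induction_linear with
  | zero => simp
  | add a b ha hb => rw [map_add, Finsupp.add_apply, Pi.add_apply, ha, hb]; push_cast; ring
  | single a b =>
      rw [iota, Finsupp.liftAddHom_apply_single, zmultiplesHom_apply, Finsupp.single_apply]
      simp only [Pi.smul_apply, delta]
      split_ifs <;> simp

lemma sigma_surjective : Function.Surjective (sigma p Y) := by
  intro q
  obtain ⟨x, rfl⟩ := abel_of_surjective (Additive.toMul q)
  show ∃ u, sigma p Y u = Additive.ofMul (Abelianization.of x)
  refine QuotientGroup.induction_on x fun w => ?_
  refine FreeGroup.induction_on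
    (C := fun w => ∃ u, sigma p Y u =
      Additive.ofMul (Abelianization.of (QuotientGroup.mk w : LGroup p Y))) w ?_ ?_ ?_ ?_
  · exact ⟨0, by simp; rfl⟩
  · intro e
    refine ⟨Finsupp.single e 1, ?_⟩
    rw [sigma, Finsupp.liftAddHom_apply_single, zmultiplesHom_apply, one_smul]
    rfl
  · rintro e ⟨u, hu⟩
    refine ⟨-u, ?_⟩
    rw [map_neg, hu, mk_inv, map_inv, ofMul_inv]
    rfl
  · rintro w1 w2 ⟨u1, hu1⟩ ⟨u2, hu2⟩
    refine ⟨u1 + u2, ?_⟩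
    rw [map_add, hu1, hu2, mk_mul, map_mul, ofMul_mul]
    rfl

end Mek

namespace Mek

variable {p : ℕ} {Y : Type*}

/-- `ψ` factored through the abelianization. -/
noncomputable def psiAb (hp : p.Prime) (hodd : Odd p) :
    Abelianization (LGroup p Y) →* Multiplicative (V p Y) :=
  Abelianization.lift (psi hp hodd)

/-- `ψ` on the abelianization, as an additive hom. -/
noncomputable def psiAdd (hp : p.Prime) (hodd : Odd p) :
    Additive (Abelianization (LGroup p Y)) →+ V p Y where
  toFun x := Multiplicative.toAdd (psiAb hp hodd (Additive.toMul x))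
  map_zero' := by simp
  map_add' x y := by simp [toMul_add]

variable (hp : p.Prime) (hodd : Odd p)

lemma psiAdd_sigma : (psiAdd hp hodd (Y := Y)).comp (sigma p Y) = iota p Y := by
  refine Finsupp.addHom_ext fun e n => ?_
  rw [AddMonoidHom.comp_apply, sigma, iota, Finsupp.liftAddHom_apply_single,
    Finsupp.liftAddHom_apply_single, zmultiplesHom_apply, zmultiplesHom_apply,
    map_zsmul]
  congr 1
  show Multiplicative.toAdd (psiAb hp hodd (Abelianization.of (genL p e))) = delta p e
  rw [psiAb, Abelianization.lift_apply_of, psi_gen]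
  rfl

lemma ker_psi_le_center (x : LGroup p Y) (hx : psi hp hodd x = 1) :
    x ∈ Subgroup.center (LGroup p Y) := by
  apply Lcommutator_le_center
  rw [← QuotientGroup.eq_one_iff (G := LGroup p Y) (N := commutator (LGroup p Y)) x]
  have h1 : Abelianization.of x = 1 := by
    have ha : Additive.ofMul (Abelianization.of x) = 0 := by
      obtain ⟨u, hu⟩ := sigma_surjective (Additive.ofMul (Abelianization.of x))
      have hiota : iota p Y u = 0 := by
        rw [← psiAdd_sigma hp hodd, AddMonoidHom.comp_apply, hu]
        show Multiplicative.toAdd (psiAb hp hodd (Abelianization.of x)) = 0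
        rw [psiAb, Abelianization.lift_apply_of, hx]
        rfl
      have hdvd : ∀ f, (p : ℤ) ∣ u f := by
        intro f
        rw [← ZMod.intCast_zmod_eq_zero_iff_dvd, ← iota_apply, hiota]
        rfl
      set u' : (Y ⊕ Y) →₀ ℤ := u.mapRange (fun z => z / p) (by simp) with hu'
      have hu2 : u = (p : ℤ) • u' := by
        ext f
        rw [hu', Finsupp.smul_apply, Finsupp.mapRange_apply, smul_eq_mul,
          Int.mul_ediv_cancel' (hdvd f)]
      rw [← hu, hu2, map_zsmul]
      obtain ⟨z, hz⟩ := abel_of_surjective (Additive.toMul (sigma p Y u'))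
      have : sigma p Y u' = Additive.ofMul (Abelianization.of z) := by
        rw [hz]; rfl
      rw [this, ← ofMul_zpow, zpow_natCast, ← map_pow, Lexp, map_one]
      rfl
    have := congrArg Additive.toMul ha
    simpa using this
  exact h1

end Mek

namespace Mek

variable {p : ℕ} {Y : Type*} (hp : p.Prime) (hodd : Odd p)

lemma center_le_ker_psi (h2 : ∃ y1 y2 : Y, y1 ≠ y2) (z : LGroup p Y)
    (hz : z ∈ Subgroup.center (LGroup p Y)) : psi hp hodd z = 1 := by
  have key : ∀ e : Y ⊕ Y,
      cmap (phi hp hodd z).a (delta p e) = cmap (delta p e) (phi hp hodd z).a := by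
    intro e
    have hcom : Commute z (genL p e) := (Subgroup.mem_center_iff.mp hz (genL p e)).symm
    have hc : ⁅z, genL p e⁆ = 1 := commutatorElement_eq_one_iff_commute.mpr hcom
    have := congrArg (phi hp hodd) hc
    rw [map_commutatorElement, map_one] at this
    have hb := congrArg M.b this
    rw [commutator_b, phi_gen, mgen_a, one_b] at hb
    exact sub_eq_zero.mp hb
  have ha : (phi hp hodd z).a = 0 := by
    funext f
    set y : Y := f.elim id id with hy
    obtain ⟨y1, y2, hne⟩ := h2
    have hc : ∃ c : Y, c ≠ y := by
      by_cases h : y1 = y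
      · exact ⟨y2, fun hh => hne (h.trans hh.symm) |>.elim⟩
      · exact ⟨y1, h⟩
    obtain ⟨c, hcy⟩ := hc
    have hfne : f ≠ Sum.inl c ∧ f ≠ Sum.inr c := by
      constructor <;> rintro rfl <;> simp [hy] at hcy
    have hbad : ¬ bad Y f (Sum.inl c) := by
      rintro (⟨y', h1, h2'⟩ | ⟨y', h1, h2'⟩)
      · exact Sum.inl_ne_inr h2'
      · cases h2'; exact hfne.2 (by rw [h1])
    have := congrFun (key (Sum.inl c)) (f, Sum.inl c)
    rw [cmap_apply, cmap_apply] at this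
    simp only [if_neg hbad, delta] at this
    rw [if_neg (show ¬ Sum.inl c = f from fun h => hfne.1 h.symm)] at this
    simpa using this
  rw [psi_apply, ha]
  rfl

/-- `ψ` descended to the central quotient. -/
noncomputable def psibar (hp : p.Prime) (hodd : Odd p) (h2 : ∃ y1 y2 : Y, y1 ≠ y2) :
    CentralQuot p Y →* Multiplicative (V p Y) :=
  QuotientGroup.lift (Subgroup.center (LGroup p Y)) (psi hp hodd)
    (fun z hz => center_le_ker_psi hp hodd h2 z hz)

lemma psibar_cbar (h2 : ∃ y1 y2 : Y, y1 ≠ y2) (x : LGroup p Y) :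
    psibar hp hodd h2 (cbar x) = psi hp hodd x := rfl

lemma psibar_injective (h2 : ∃ y1 y2 : Y, y1 ≠ y2) :
    Function.Injective (psibar hp hodd h2) := by
  rw [injective_iff_map_eq_one]
  intro k hk
  refine QuotientGroup.induction_on
    (C := fun k => psibar hp hodd h2 k = 1 → k = 1) k (fun x hx => ?_) hk
  exact (QuotientGroup.eq_one_iff x).mpr
    (ker_psi_le_center hp hodd x hx)

end Mek

namespace Mek

variable {p : ℕ} {Y : Type*} (hp : p.Prime)

lemma comb_mem (hp : p.Prime) (S : Subgroup (Multiplicative (V p Y))) (v w : V p Y)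
    (hv : Multiplicative.ofAdd v ∈ S) (hw : Multiplicative.ofAdd w ∈ S) (c d : ZMod p) :
    Multiplicative.ofAdd (c • v + d • w) ∈ S := by
  haveI : NeZero p := ⟨hp.pos.ne'⟩
  have hc : c • v = c.val • v := by
    rw [← Nat.cast_smul_eq_nsmul (ZMod p), ZMod.natCast_val, ZMod.cast_id]
  have hd : d • w = d.val • w := by
    rw [← Nat.cast_smul_eq_nsmul (ZMod p), ZMod.natCast_val, ZMod.cast_id]
  rw [hc, hd, ofAdd_add, ofAdd_nsmul, ofAdd_nsmul]
  exact S.mul_mem (S.pow_mem hv _) (S.pow_mem hw _)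

section LinAlg

variable (α β : V p Y)

/-- Dichotomy: either the pair is "proportional", or some 2×2 minor is nonzero. -/
lemma prop_or_det (hp : p.Prime) :
    (∃ c : ZMod p, β = c • α ∨ α = c • β) ∨ (∃ s t : Y ⊕ Y, α s * β t ≠ α t * β s) := by
  haveI : Fact p.Prime := ⟨hp⟩
  by_cases hd : ∀ s t, α s * β t = α t * β s
  · left
    by_cases hα : α = 0
    · exact ⟨0, Or.inr (by simp [hα])⟩
    · obtain ⟨s0, hs0⟩ : ∃ s0, α s0 ≠ 0 := by
        by_contra h; push_neg at h; exact hα (funext h)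
      refine ⟨β s0 * (α s0)⁻¹, Or.inl ?_⟩
      funext t
      have := hd s0 t
      rw [Pi.smul_apply, smul_eq_mul, mul_right_comm, ← div_eq_mul_inv, eq_div_iff hs0]
      calc β t * α s0 = α s0 * β t := by ring
        _ = α t * β s0 := this
        _ = β s0 * α t := by ring
  · right; push_neg at hd; exact hd

lemma det_vertex (hp : p.Prime) (hcm : cmap α β = cmap β α) {s t : Y ⊕ Y}
    (hne : α s * β t ≠ α t * β s) :
    ∃ y : Y, α (Sum.inl y) * β (Sum.inr y) ≠ α (Sum.inr y) * β (Sum.inl y) ∧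
      ∀ f : Y ⊕ Y, f ≠ Sum.inl y → f ≠ Sum.inr y → α f = 0 ∧ β f = 0 := by
  have hst : bad Y s t := by
    by_contra hb
    have := congrFun hcm (s, t)
    rw [cmap_apply, cmap_apply, if_neg hb, if_neg hb] at this
    exact hne (by rw [this]; ring)
  have key : ∀ y : Y,
      α (Sum.inl y) * β (Sum.inr y) ≠ α (Sum.inr y) * β (Sum.inl y) →
      ∀ f : Y ⊕ Y, f ≠ Sum.inl y → f ≠ Sum.inr y → α f = 0 ∧ β f = 0 := by
    intro y hdet f hf1 hf2
    have h1 : α (Sum.inl y) * β f = β (Sum.inl y) * α f := by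
      have hb : ¬ bad Y (Sum.inl y) f := by
        rintro (⟨y', e1, e2⟩ | ⟨y', e1, e2⟩)
        · cases e1; exact hf2 e2
        · exact Sum.inl_ne_inr e1
      have := congrFun hcm (Sum.inl y, f)
      rw [cmap_apply, cmap_apply, if_neg hb, if_neg hb] at this
      exact this
    have h2 : α (Sum.inr y) * β f = β (Sum.inr y) * α f := by
      have hb : ¬ bad Y (Sum.inr y) f := by
        rintro (⟨y', e1, e2⟩ | ⟨y', e1, e2⟩)
        · exact Sum.inr_ne_inl e1
        · cases e1; exact hf1 e2
      have := congrFun hcm (Sum.inr y, f)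
      rw [cmap_apply, cmap_apply, if_neg hb, if_neg hb] at this
      exact this
    haveI : Fact p.Prime := ⟨hp⟩
    have hdet' : α (Sum.inl y) * β (Sum.inr y) - α (Sum.inr y) * β (Sum.inl y) ≠ 0 :=
      sub_ne_zero.mpr hdet
    constructor
    · apply mul_left_cancel₀ hdet'
      have : (α (Sum.inl y) * β (Sum.inr y) - α (Sum.inr y) * β (Sum.inl y)) * α f
          = α (Sum.inl y) * (β (Sum.inr y) * α f) - α (Sum.inr y) * (β (Sum.inl y) * α f) := by
        ring
      rw [mul_zero, this, ← h2, ← h1]; ring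
    · apply mul_left_cancel₀ hdet'
      have : (α (Sum.inl y) * β (Sum.inr y) - α (Sum.inr y) * β (Sum.inl y)) * β f
          = β (Sum.inr y) * (α (Sum.inl y) * β f) - β (Sum.inl y) * (α (Sum.inr y) * β f) := by
        ring
      rw [mul_zero, this, h1, h2]; ring
  rcases hst with ⟨y, rfl, rfl⟩ | ⟨y, rfl, rfl⟩
  · exact ⟨y, hne, key y hne⟩
  · have hne' : α (Sum.inl y) * β (Sum.inr y) ≠ α (Sum.inr y) * β (Sum.inl y) := by
      intro h; exact hne h.symm
    exact ⟨y, hne', key y hne'⟩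

end LinAlg

end Mek

namespace Mek

variable {p : ℕ} {Y : Type*}

lemma closure_eq_coord (hp : p.Prime) (α β : V p Y) {y : Y}
    (hdet : α (Sum.inl y) * β (Sum.inr y) ≠ α (Sum.inr y) * β (Sum.inl y))
    (hsupp : ∀ f : Y ⊕ Y, f ≠ Sum.inl y → f ≠ Sum.inr y → α f = 0 ∧ β f = 0) :
    Subgroup.closure {Multiplicative.ofAdd α, Multiplicative.ofAdd β} =
      Subgroup.closure {Multiplicative.ofAdd (delta p (Sum.inl y)),
        Multiplicative.ofAdd (delta p (Sum.inr y))} := by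
  haveI : Fact p.Prime := ⟨hp⟩
  set a1 := α (Sum.inl y); set a2 := α (Sum.inr y)
  set b1 := β (Sum.inl y); set b2 := β (Sum.inr y)
  have hmix : ∀ (c d : ZMod p) (f : Y ⊕ Y),
      (c • delta p (Sum.inl y) + d • delta p (Sum.inr y)) f
        = if Sum.inl y = f then c else if Sum.inr y = f then d else 0 := by
    intro c d f
    simp only [Pi.add_apply, Pi.smul_apply, delta, smul_eq_mul]
    by_cases h1 : Sum.inl y = f
    · have h2 : ¬ Sum.inr y = f := by rw [← h1]; simp
      simp [h1, h2]
    · by_cases h2 : Sum.inr y = f <;> simp [h1, h2]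
  have hmix2 : ∀ (c d : ZMod p) (f : Y ⊕ Y),
      (c • α + d • β) f = c * α f + d * β f := by
    intro c d f; simp [Pi.add_apply]
  have hd : a1 * b2 - a2 * b1 ≠ 0 := sub_ne_zero.mpr hdet
  apply le_antisymm
  · rw [Subgroup.closure_le]
    have hα : Multiplicative.ofAdd α ∈ Subgroup.closure
        {Multiplicative.ofAdd (delta p (Sum.inl y : Y ⊕ Y)),
          Multiplicative.ofAdd (delta p (Sum.inr y))} := by
      have hαeq : α = a1 • delta p (Sum.inl y) + a2 • delta p (Sum.inr y) := by
        funext f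
        rw [hmix]
        split_ifs with h1 h2
        · rw [← h1]
        · rw [← h2]
        · exact (hsupp f (fun hh => h1 hh.symm) (fun hh => h2 hh.symm)).1
      rw [hαeq]
      exact comb_mem hp _ _ _ (Subgroup.subset_closure (by simp))
        (Subgroup.subset_closure (by simp)) _ _
    have hβ : Multiplicative.ofAdd β ∈ Subgroup.closure
        {Multiplicative.ofAdd (delta p (Sum.inl y : Y ⊕ Y)),
          Multiplicative.ofAdd (delta p (Sum.inr y))} := by
      have hβeq : β = b1 • delta p (Sum.inl y) + b2 • delta p (Sum.inr y) := by
        funext f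
        rw [hmix]
        split_ifs with h1 h2
        · rw [← h1]
        · rw [← h2]
        · exact (hsupp f (fun hh => h1 hh.symm) (fun hh => h2 hh.symm)).2
      rw [hβeq]
      exact comb_mem hp _ _ _ (Subgroup.subset_closure (by simp))
        (Subgroup.subset_closure (by simp)) _ _
    intro x hx
    rcases hx with h | h
    · rw [h]; exact hα
    · rw [Set.mem_singleton_iff] at h; rw [h]; exact hβ
  · rw [Subgroup.closure_le]
    have hA : Multiplicative.ofAdd (delta p (Sum.inl y : Y ⊕ Y)) ∈ Subgroup.closure
        {Multiplicative.ofAdd α, Multiplicative.ofAdd β} := by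
      have h1 : delta p (Sum.inl y)
          = (b2 * (a1 * b2 - a2 * b1)⁻¹) • α + (-a2 * (a1 * b2 - a2 * b1)⁻¹) • β := by
        funext f
        rw [hmix2]
        by_cases h1 : Sum.inl y = f
        · rw [delta, if_pos h1, ← h1]
          show (1 : ZMod p) = b2 * (a1 * b2 - a2 * b1)⁻¹ * a1 + -a2 * (a1 * b2 - a2 * b1)⁻¹ * b1
          rw [show b2 * (a1 * b2 - a2 * b1)⁻¹ * a1 + -a2 * (a1 * b2 - a2 * b1)⁻¹ * b1
            = (a1 * b2 - a2 * b1) * (a1 * b2 - a2 * b1)⁻¹ by ring, mul_inv_cancel₀ hd]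
        · by_cases h2 : Sum.inr y = f
          · rw [delta, if_neg h1, ← h2]
            show (0 : ZMod p) = _
            field_simp
            ring
          · obtain ⟨hα0, hβ0⟩ :=
              hsupp f (fun hh => h1 hh.symm) (fun hh => h2 hh.symm)
            rw [delta, if_neg h1, hα0, hβ0]; ring
      rw [h1]
      exact comb_mem hp _ _ _ (Subgroup.subset_closure (by simp))
        (Subgroup.subset_closure (by simp)) _ _
    have hB : Multiplicative.ofAdd (delta p (Sum.inr y : Y ⊕ Y)) ∈ Subgroup.closure
        {Multiplicative.ofAdd α, Multiplicative.ofAdd β} := by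
      have h1 : delta p (Sum.inr y)
          = (-b1 * (a1 * b2 - a2 * b1)⁻¹) • α + (a1 * (a1 * b2 - a2 * b1)⁻¹) • β := by
        funext f
        rw [hmix2]
        by_cases h1 : Sum.inr y = f
        · rw [delta, if_pos h1, ← h1]
          show (1 : ZMod p) = -b1 * (a1 * b2 - a2 * b1)⁻¹ * a2 + a1 * (a1 * b2 - a2 * b1)⁻¹ * b2
          rw [show -b1 * (a1 * b2 - a2 * b1)⁻¹ * a2 + a1 * (a1 * b2 - a2 * b1)⁻¹ * b2
            = (a1 * b2 - a2 * b1) * (a1 * b2 - a2 * b1)⁻¹ by ring, mul_inv_cancel₀ hd]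
        · by_cases h2 : Sum.inl y = f
          · rw [delta, if_neg h1, ← h2]
            show (0 : ZMod p) = _
            field_simp
            ring
          · obtain ⟨hα0, hβ0⟩ :=
              hsupp f (fun hh => h2 hh.symm) (fun hh => h1 hh.symm)
            rw [delta, if_neg h1, hα0, hβ0]; ring
      rw [h1]
      exact comb_mem hp _ _ _ (Subgroup.subset_closure (by simp))
        (Subgroup.subset_closure (by simp)) _ _
    intro x hx
    rcases hx with h | h
    · rw [h]; exact hA
    · rw [Set.mem_singleton_iff] at h; rw [h]; exact hB

/-- The subgroup of multiplicative `V` of elements vanishing at `f0`. -/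
def vanishSub (p : ℕ) {Y : Type*} (f0 : Y ⊕ Y) : Subgroup (Multiplicative (V p Y)) where
  carrier := {m | Multiplicative.toAdd m f0 = 0}
  one_mem' := rfl
  mul_mem' := by
    intro a b ha hb
    show Multiplicative.toAdd (a * b) f0 = 0
    rw [toAdd_mul]
    show Multiplicative.toAdd a f0 + Multiplicative.toAdd b f0 = 0
    rw [ha, hb, add_zero]
  inv_mem' := by
    intro a ha
    show Multiplicative.toAdd a⁻¹ f0 = 0
    rw [toAdd_inv]
    show -Multiplicative.toAdd a f0 = 0
    rw [ha, neg_zero]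

lemma coord_unique (hp : p.Prime) {y y' : Y}
    (h : Subgroup.closure {Multiplicative.ofAdd (delta p (Sum.inl y)),
        Multiplicative.ofAdd (delta p (Sum.inr y))} =
      Subgroup.closure {Multiplicative.ofAdd (delta p (Sum.inl y')),
        Multiplicative.ofAdd (delta p (Sum.inr y'))}) : y = y' := by
  haveI : Fact p.Prime := ⟨hp⟩
  by_contra hne
  have hmem : Multiplicative.ofAdd (delta p (Sum.inl y' : Y ⊕ Y)) ∈
      Subgroup.closure {Multiplicative.ofAdd (delta p (Sum.inl y : Y ⊕ Y)),
        Multiplicative.ofAdd (delta p (Sum.inr y))} := by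
    rw [h]; exact Subgroup.subset_closure (by simp)
  have hle : Subgroup.closure {Multiplicative.ofAdd (delta p (Sum.inl y : Y ⊕ Y)),
      Multiplicative.ofAdd (delta p (Sum.inr y))} ≤ vanishSub p (Sum.inl y') := by
    rw [Subgroup.closure_le]
    have key : ∀ e : Y ⊕ Y, e ≠ Sum.inl y' →
        Multiplicative.ofAdd (delta p e) ∈ vanishSub p (Sum.inl y') := by
      intro e he
      show delta p e (Sum.inl y') = 0
      simp only [delta, if_neg he]
    intro x hx
    rcases hx with h | h
    · rw [h]; exact key _ (by simp only [ne_eq, Sum.inl.injEq]; exact hne)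
    · rw [Set.mem_singleton_iff] at h; rw [h]; exact key _ (by simp)
  have h0 : delta p (Sum.inl y' : Y ⊕ Y) (Sum.inl y') = 0 := hle hmem
  simp only [delta, if_pos rfl] at h0
  exact one_ne_zero h0

end Mek

namespace Mek

variable {p : ℕ} {Y : Type*}

lemma genL_eq (e : Y ⊕ Y) : genL p e = mkL p (FreeGroup.of e) := rfl

lemma gen_comm_rel (y : Y) :
    ⁅genL p (Sum.inl y : Y ⊕ Y), genL p (Sum.inr y)⁆ = 1 := by
  rw [genL_eq, genL_eq, ← map_commutatorElement, ← mk_eq_mkL]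
  exact mk_rel (Or.inr ⟨y, rfl⟩)

lemma comm_of_small (h : ∀ y1 y2 : Y, y1 = y2) (x z : LGroup p Y) : Commute x z := by
  have hgen : ∀ e f : Y ⊕ Y, Commute (genL p e) (genL p f) := by
    intro e f
    rcases e with y1 | y1 <;> rcases f with y2 | y2
    · rw [h y1 y2]
    · rw [h y1 y2]
      exact commutatorElement_eq_one_iff_commute.mp (gen_comm_rel y2)
    · rw [h y1 y2]
      exact (commutatorElement_eq_one_iff_commute.mp (gen_comm_rel y2)).symm
    · rw [h y1 y2]
  have step1 : ∀ (e : Y ⊕ Y) (z : LGroup p Y), Commute (genL p e) z := by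
    intro e z
    refine QuotientGroup.induction_on z fun w => ?_
    refine FreeGroup.induction_on
      (C := fun w => Commute (genL p e) (QuotientGroup.mk w : LGroup p Y)) w ?_ ?_ ?_ ?_
    · exact Commute.one_right _
    · intro f; exact hgen e f
    · intro f hf; rw [mk_inv]; exact hf.inv_right
    · intro w1 w2 h1 h2; rw [mk_mul]; exact h1.mul_right h2
  refine QuotientGroup.induction_on x fun w => ?_
  refine FreeGroup.induction_on
    (C := fun w => Commute (QuotientGroup.mk w : LGroup p Y) z) w ?_ ?_ ?_ ?_
  · exact Commute.one_left _
  · intro f; exact step1 f z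
  · intro f hf; rw [mk_inv]; exact hf.inv_left
  · intro w1 w2 h1 h2; rw [mk_mul]; exact h1.mul_left h2

lemma subsingleton_centralQuot (h : ∀ y1 y2 : Y, y1 = y2) (k : CentralQuot p Y) :
    k = 1 := by
  refine QuotientGroup.induction_on k fun x => ?_
  refine (QuotientGroup.eq_one_iff (N := Subgroup.center (LGroup p Y)) x).mpr ?_
  rw [Subgroup.mem_center_iff]
  intro g
  exact comm_of_small h g x

lemma closure_pair_cyc {G : Type*} [Group G] {A B z : G} (hA : A ∈ Subgroup.zpowers z)
    (hB : B ∈ Subgroup.zpowers z) (hz : z ∈ Subgroup.closure {A, B}) :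
    Subgroup.closure {A, B} = Subgroup.zpowers z := by
  apply le_antisymm
  · rw [Subgroup.closure_le]
    intro x hx
    rcases hx with h | h
    · rw [h]; exact hA
    · rw [Set.mem_singleton_iff] at h; rw [h]; exact hB
  · rintro w ⟨k, rfl⟩
    exact Subgroup.zpow_mem _ hz k

lemma zmod_smul_eq_val (hp : p.Prime) (c : ZMod p) (v : V p Y) : c • v = c.val • v := by
  haveI : NeZero p := ⟨hp.pos.ne'⟩
  rw [← Nat.cast_smul_eq_nsmul (ZMod p), ZMod.natCast_val, ZMod.cast_id]

end Mek

/-- If `g : L(X) → L(Y)` is a surjective homomorphism such that for each `v` the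
subgroup of the central quotient generated by the images of `g(a_v), g(b_v)` is
not cyclic, then for each `v` there is a unique `y` with
`⟨g(a_v)‾, g(b_v)‾⟩ = ⟨a_y‾, b_y‾⟩`. -/
theorem unique_vertex {p : ℕ} (hp : p.Prime) (hodd : Odd p) {X Y : Type*}
    (g : LGroup p X →* LGroup p Y) (hg : Function.Surjective g)
    (hnc : ∀ v : X, ¬ ∃ z : CentralQuot p Y,
      Subgroup.closure {cbar (g (aGen p v)), cbar (g (bGen p v))} =
        Subgroup.zpowers z) :
    ∀ v : X, ∃! y : Y,
      Subgroup.closure {cbar (g (aGen p v)), cbar (g (bGen p v))} =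
        Subgroup.closure {cbar (aGen p y), cbar (bGen p y)} := by
  intro v
  by_cases h2 : ∃ y1 y2 : Y, y1 ≠ y2
  · set A := g (aGen p v) with hA
    set B := g (bGen p v) with hB
    have hABone : ⁅A, B⁆ = 1 := by
      have h0 : ⁅aGen p v, bGen p v⁆ = 1 := Mek.gen_comm_rel v
      rw [hA, hB, ← map_commutatorElement, h0, map_one]
    set α := (Mek.phi hp hodd A).a with hα
    set β := (Mek.phi hp hodd B).a with hβ
    have hpsiA : Mek.psi hp hodd A = Multiplicative.ofAdd α := rfl
    have hpsiB : Mek.psi hp hodd B = Multiplicative.ofAdd β := rfl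
    have hcm : Mek.cmap α β = Mek.cmap β α := by
      have h1 := congrArg (Mek.phi hp hodd) hABone
      rw [map_commutatorElement, map_one] at h1
      have hb := congrArg Mek.M.b h1
      rw [Mek.commutator_b, Mek.one_b] at hb
      exact sub_eq_zero.mp hb
    have hinj := Mek.psibar_injective hp hodd h2
    rcases Mek.prop_or_det α β hp with ⟨c, hc | hc⟩ | ⟨s, t, hst⟩
    · exfalso; apply hnc v
      refine ⟨cbar A, ?_⟩
      have hBA : cbar B = (cbar A) ^ c.val := by
        apply hinj
        rw [map_pow, Mek.psibar_cbar, Mek.psibar_cbar, hpsiA, hpsiB,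
          ← ofAdd_nsmul, ← Mek.zmod_smul_eq_val hp, ← hc]
      refine Mek.closure_pair_cyc (Subgroup.mem_zpowers _) ?_
        (Subgroup.subset_closure (by simp [hA]))
      rw [hBA]; exact Subgroup.pow_mem _ (Subgroup.mem_zpowers _) _
    · exfalso; apply hnc v
      refine ⟨cbar B, ?_⟩
      have hAB2 : cbar A = (cbar B) ^ c.val := by
        apply hinj
        rw [map_pow, Mek.psibar_cbar, Mek.psibar_cbar, hpsiA, hpsiB,
          ← ofAdd_nsmul, ← Mek.zmod_smul_eq_val hp, ← hc]
      refine Mek.closure_pair_cyc ?_ (Subgroup.mem_zpowers _)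
        (Subgroup.subset_closure (by simp [hB]))
      rw [hAB2]; exact Subgroup.pow_mem _ (Subgroup.mem_zpowers _) _
    · obtain ⟨y, hdet, hsupp⟩ := Mek.det_vertex α β hp hcm hst
      have hVeq := Mek.closure_eq_coord hp α β hdet hsupp
      have hmap : ∀ (x1 x2 : CentralQuot p Y),
          Subgroup.map (Mek.psibar hp hodd h2) (Subgroup.closure {x1, x2}) =
            Subgroup.closure {Mek.psibar hp hodd h2 x1, Mek.psibar hp hodd h2 x2} := by
        intro x1 x2
        rw [MonoidHom.map_closure, Set.image_insert_eq, Set.image_singleton]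
      have hgen : ∀ y' : Y,
          Subgroup.map (Mek.psibar hp hodd h2)
            (Subgroup.closure {cbar (aGen p y'), cbar (bGen p y')}) =
          Subgroup.closure {Multiplicative.ofAdd (Mek.delta p (Sum.inl y' : Y ⊕ Y)),
            Multiplicative.ofAdd (Mek.delta p (Sum.inr y'))} := by
        intro y'
        rw [hmap, Mek.psibar_cbar, Mek.psibar_cbar, Mek.aGen_eq, Mek.bGen_eq,
          Mek.psi_gen hp hodd, Mek.psi_gen hp hodd]
      refine ⟨y, ?_, ?_⟩
      · apply Subgroup.map_injective hinj
        rw [hmap, Mek.psibar_cbar, Mek.psibar_cbar, hpsiA, hpsiB, hgen y]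
        exact hVeq
      · intro y' hy'
        have h1 := congrArg (Subgroup.map (Mek.psibar hp hodd h2)) hy'
        rw [hmap, Mek.psibar_cbar, Mek.psibar_cbar, hpsiA, hpsiB, hgen y'] at h1
        exact Mek.coord_unique hp (h1.symm.trans hVeq)
  · exfalso
    apply hnc v
    push_neg at h2
    have hss : ∀ k : CentralQuot p Y, k = 1 := Mek.subsingleton_centralQuot h2
    refine ⟨1, Subgroup.ext fun k => ?_⟩
    rw [hss k]
    simp [Subgroup.one_mem]
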